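/- Let m₊ > 0, s₊ > 0, m₋ < 0, s₋ > 0 (the sample means and standard deviations of nonempty datasets X₊ ⊂ (0,∞) and X₋ ⊂ (−∞,0)). For p > 0 define m₊(p) = (−p²·m₊ + p·√((p²+4)·m₊² + 4·s₊²))/2, m₋(p) = (−p²·m₋ − p·√((p²+4)·m₋² + 4·s₋²))/2, σ±(p) = |m±(p)|/p, and g±ᵖ = φ_{m±(p),σ±(p)}. Then for every x with 0 < x ≤ 2·(m₊ + s₊²/m₊), the difference ln g₊ᵖ(x) − ln g₋ᵖ(x) tends to +∞ as p → ∞. -/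

import Mathlib

open Filter

/-- Univariate Gaussian density. -/
noncomputable def gaussPdf (m σ t : ℝ) : ℝ :=
  (1 / (σ * Real.sqrt (2 * Real.pi))) * Real.exp (-((t - m) ^ 2) / (2 * σ ^ 2))

lemma log_gaussPdf (m σ t : ℝ) (hσ : 0 < σ) :
    Real.log (gaussPdf m σ t) =
      -Real.log σ - Real.log (Real.sqrt (2 * Real.pi)) - (t - m) ^ 2 / (2 * σ ^ 2) := by
  have hπ := Real.pi_pos
  have h1 : (1 / (σ * Real.sqrt (2 * Real.pi))) ≠ 0 := by positivity
  rw [gaussPdf, Real.log_mul h1 (Real.exp_ne_zero _), Real.log_exp, one_div, Real.log_inv,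
    Real.log_mul hσ.ne' (by positivity : Real.sqrt (2 * Real.pi) ≠ 0)]
  ring

lemma aux_sqrt_div (c s : ℝ) :
    Tendsto (fun p : ℝ => Real.sqrt ((p ^ 2 + 4) * c ^ 2 + 4 * s ^ 2) / p) atTop (nhds |c|) := by
  have h2 : Tendsto (fun p : ℝ => p ^ 2) atTop atTop := tendsto_pow_atTop two_ne_zero
  have h0 : Tendsto (fun p : ℝ => (4 * c ^ 2 + 4 * s ^ 2) / p ^ 2) atTop (nhds 0) :=
    tendsto_const_nhds.div_atTop h2
  have h1 : Tendsto (fun p : ℝ => c ^ 2 + (4 * c ^ 2 + 4 * s ^ 2) / p ^ 2) atTop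
      (nhds (c ^ 2)) := by
    simpa using tendsto_const_nhds.add h0
  have h1' : Tendsto (fun p : ℝ => Real.sqrt (c ^ 2 + (4 * c ^ 2 + 4 * s ^ 2) / p ^ 2)) atTop
      (nhds |c|) := by
    have := h1.sqrt
    rwa [Real.sqrt_sq_eq_abs] at this
  refine Tendsto.congr' ?_ h1'
  filter_upwards [eventually_gt_atTop 0] with p hp
  have hp2 : (0 : ℝ) < p ^ 2 := by positivity
  rw [show c ^ 2 + (4 * c ^ 2 + 4 * s ^ 2) / p ^ 2 = ((p ^ 2 + 4) * c ^ 2 + 4 * s ^ 2) / p ^ 2 by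
      field_simp; ring,
    Real.sqrt_div (by positivity), Real.sqrt_sq hp.le]

set_option maxHeartbeats 1000000 in
/-- For points `x` on the positive side of the boundary within the margin
`x ≤ 2 (m₊ + s₊²/m₊)`, the log-density difference of the two constrained-optimal
Gaussian cluster models tends to `+∞` as `p → ∞` (leakage `α → 0`). -/
theorem c3l_logDensity_difference_tendsto_atTop
    (mPlus sPlus mMinus sMinus : ℝ)
    (hmPlus : 0 < mPlus) (hsPlus : 0 < sPlus)
    (hmMinus : mMinus < 0) (hsMinus : 0 < sMinus)
    (mp mm σp σm : ℝ → ℝ)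
    (hmp : ∀ p, mp p =
      (-(p ^ 2) * mPlus + p * Real.sqrt ((p ^ 2 + 4) * mPlus ^ 2 + 4 * sPlus ^ 2)) / 2)
    (hmm : ∀ p, mm p =
      (-(p ^ 2) * mMinus - p * Real.sqrt ((p ^ 2 + 4) * mMinus ^ 2 + 4 * sMinus ^ 2)) / 2)
    (hσp : ∀ p, σp p = |mp p| / p) (hσm : ∀ p, σm p = |mm p| / p)
    (x : ℝ) (hx0 : 0 < x) (hxC : x ≤ 2 * (mPlus + sPlus ^ 2 / mPlus)) :
    Tendsto (fun p => Real.log (gaussPdf (mp p) (σp p) x) - Real.log (gaussPdf (mm p) (σm p) x))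
      atTop atTop := by
  have hπ := Real.pi_pos
  set Lp : ℝ := mPlus + sPlus ^ 2 / mPlus with hLpdef
  set Lm : ℝ := mMinus + sMinus ^ 2 / mMinus with hLmdef
  have hLp : 0 < Lp := by rw [hLpdef]; positivity
  have hLm : Lm < 0 := by
    have h1 : sMinus ^ 2 / mMinus < 0 := div_neg_of_pos_of_neg (by positivity) hmMinus
    rw [hLmdef]; linarith
  -- positivity / negativity of the optimal means
  have hmp_pos : ∀ p : ℝ, 0 < p → 0 < mp p := by
    intro p hp
    have harg : (0 : ℝ) ≤ (p ^ 2 + 4) * mPlus ^ 2 + 4 * sPlus ^ 2 := by positivity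
    have hsq2 := Real.sq_sqrt harg
    have hsqnn := Real.sqrt_nonneg ((p ^ 2 + 4) * mPlus ^ 2 + 4 * sPlus ^ 2)
    rw [hmp]
    nlinarith [mul_pos hp hmPlus, sq_nonneg sPlus]
  have hmm_neg : ∀ p : ℝ, 0 < p → mm p < 0 := by
    intro p hp
    have harg : (0 : ℝ) ≤ (p ^ 2 + 4) * mMinus ^ 2 + 4 * sMinus ^ 2 := by positivity
    have hsq2 := Real.sq_sqrt harg
    have hsqnn := Real.sqrt_nonneg ((p ^ 2 + 4) * mMinus ^ 2 + 4 * sMinus ^ 2)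
    rw [hmm]
    nlinarith [mul_pos hp (neg_pos.mpr hmMinus), sq_nonneg sMinus]
  -- limit of mp
  have hmpt : Tendsto mp atTop (nhds Lp) := by
    have hden : Tendsto (fun p : ℝ =>
        Real.sqrt ((p ^ 2 + 4) * mPlus ^ 2 + 4 * sPlus ^ 2) / p + mPlus) atTop
        (nhds (|mPlus| + mPlus)) := (aux_sqrt_div _ _).add tendsto_const_nhds
    rw [abs_of_pos hmPlus] at hden
    have hdiv : Tendsto (fun p : ℝ => 2 * (mPlus ^ 2 + sPlus ^ 2) /
        (Real.sqrt ((p ^ 2 + 4) * mPlus ^ 2 + 4 * sPlus ^ 2) / p + mPlus)) atTop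
        (nhds (2 * (mPlus ^ 2 + sPlus ^ 2) / (mPlus + mPlus))) :=
      tendsto_const_nhds.div hden (by positivity)
    have hval : 2 * (mPlus ^ 2 + sPlus ^ 2) / (mPlus + mPlus) = Lp := by
      rw [hLpdef, eq_comm, eq_div_iff (by positivity : mPlus + mPlus ≠ 0)]
      field_simp [hmPlus.ne']
      ring
    rw [hval] at hdiv
    refine Tendsto.congr' ?_ hdiv
    filter_upwards [eventually_gt_atTop 0] with p hp
    have harg : (0 : ℝ) ≤ (p ^ 2 + 4) * mPlus ^ 2 + 4 * sPlus ^ 2 := by positivity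
    have hsq2 := Real.sq_sqrt harg
    have hsqnn := Real.sqrt_nonneg ((p ^ 2 + 4) * mPlus ^ 2 + 4 * sPlus ^ 2)
    have hdenpos : 0 < Real.sqrt ((p ^ 2 + 4) * mPlus ^ 2 + 4 * sPlus ^ 2) / p + mPlus := by
      have := div_nonneg hsqnn hp.le
      linarith
    rw [hmp, eq_comm, eq_div_iff hdenpos.ne']
    field_simp [hp.ne']
    have hsq2' := Real.sq_sqrt (by positivity : (0 : ℝ) ≤ mPlus ^ 2 * (p ^ 2 + 4) + 4 * sPlus ^ 2)
    linear_combination hsq2'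
  -- limit of mm
  have hmmt : Tendsto mm atTop (nhds Lm) := by
    have hden : Tendsto (fun p : ℝ =>
        Real.sqrt ((p ^ 2 + 4) * mMinus ^ 2 + 4 * sMinus ^ 2) / p - mMinus) atTop
        (nhds (|mMinus| - mMinus)) := (aux_sqrt_div _ _).sub tendsto_const_nhds
    rw [abs_of_neg hmMinus] at hden
    have hdiv : Tendsto (fun p : ℝ => -(2 * (mMinus ^ 2 + sMinus ^ 2)) /
        (Real.sqrt ((p ^ 2 + 4) * mMinus ^ 2 + 4 * sMinus ^ 2) / p - mMinus)) atTop
        (nhds (-(2 * (mMinus ^ 2 + sMinus ^ 2)) / (-mMinus - mMinus))) :=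
      tendsto_const_nhds.div hden (by intro h; nlinarith)
    have hval : -(2 * (mMinus ^ 2 + sMinus ^ 2)) / (-mMinus - mMinus) = Lm := by
      rw [hLmdef, eq_comm, eq_div_iff (by intro h; nlinarith : -mMinus - mMinus ≠ 0)]
      field_simp [hmMinus.ne]
      ring
    rw [hval] at hdiv
    refine Tendsto.congr' ?_ hdiv
    filter_upwards [eventually_gt_atTop 0] with p hp
    have harg : (0 : ℝ) ≤ (p ^ 2 + 4) * mMinus ^ 2 + 4 * sMinus ^ 2 := by positivity
    have hsq2 := Real.sq_sqrt harg
    have hsqnn := Real.sqrt_nonneg ((p ^ 2 + 4) * mMinus ^ 2 + 4 * sMinus ^ 2)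
    have hdenpos : 0 < Real.sqrt ((p ^ 2 + 4) * mMinus ^ 2 + 4 * sMinus ^ 2) / p - mMinus := by
      have := div_nonneg hsqnn hp.le
      linarith
    rw [hmm, eq_comm, eq_div_iff hdenpos.ne']
    field_simp [hp.ne']
    have hsq2' := Real.sq_sqrt (by positivity : (0 : ℝ) ≤ mMinus ^ 2 * (p ^ 2 + 4) + 4 * sMinus ^ 2)
    linear_combination -hsq2'
  -- the limiting coefficient is positive
  set c : ℝ := (x - Lm) ^ 2 / Lm ^ 2 - (x - Lp) ^ 2 / Lp ^ 2 with hcdef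
  have hLp2 : 0 < Lp ^ 2 := pow_pos hLp 2
  have hLm2 : 0 < Lm ^ 2 := by nlinarith
  have hc : 0 < c := by
    have h1 : (x - Lp) ^ 2 / Lp ^ 2 ≤ 1 := by
      rw [div_le_one hLp2]
      nlinarith
    have h2 : 1 < (x - Lm) ^ 2 / Lm ^ 2 := by
      rw [lt_div_iff₀ hLm2]
      nlinarith
    rw [hcdef]; linarith
  -- limit of the quadratic coefficient
  have hF : Tendsto (fun p => (x - mm p) ^ 2 / (mm p) ^ 2 - (x - mp p) ^ 2 / (mp p) ^ 2)
      atTop (nhds c) := by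
    refine Tendsto.sub ?_ ?_
    · exact ((tendsto_const_nhds.sub hmmt).pow 2).div (hmmt.pow 2)
        (pow_ne_zero 2 hLm.ne)
    · exact ((tendsto_const_nhds.sub hmpt).pow 2).div (hmpt.pow 2)
        (pow_ne_zero 2 hLp.ne')
  have hp2F : Tendsto (fun p : ℝ => p ^ 2 / 2 *
      ((x - mm p) ^ 2 / (mm p) ^ 2 - (x - mp p) ^ 2 / (mp p) ^ 2)) atTop atTop :=
    Tendsto.atTop_mul_pos hc ((tendsto_pow_atTop two_ne_zero).atTop_div_const two_pos) hF
  have hlog : Tendsto (fun p => Real.log (-(mm p)) - Real.log (mp p)) atTop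
      (nhds (Real.log (-Lm) - Real.log Lp)) := by
    refine Tendsto.sub ?_ ?_
    · exact (Real.continuousAt_log (by linarith : -Lm ≠ 0)).tendsto.comp hmmt.neg
    · exact (Real.continuousAt_log hLp.ne').tendsto.comp hmpt
  have hG : Tendsto (fun p : ℝ => (Real.log (-(mm p)) - Real.log (mp p)) + p ^ 2 / 2 *
      ((x - mm p) ^ 2 / (mm p) ^ 2 - (x - mp p) ^ 2 / (mp p) ^ 2)) atTop atTop :=
    hlog.add_atTop hp2F
  refine Tendsto.congr' ?_ hG
  filter_upwards [eventually_gt_atTop 0] with p hp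
  have hmpp := hmp_pos p hp
  have hmmp := hmm_neg p hp
  have hσpp : σp p = mp p / p := by rw [hσp, abs_of_pos hmpp]
  have hσmp : σm p = -(mm p) / p := by rw [hσm, abs_of_neg hmmp]
  have hσppos : 0 < σp p := by rw [hσpp]; exact div_pos hmpp hp
  have hσmpos : 0 < σm p := by rw [hσmp]; exact div_pos (neg_pos.mpr hmmp) hp
  rw [log_gaussPdf _ _ _ hσppos, log_gaussPdf _ _ _ hσmpos, hσpp, hσmp,
    Real.log_div hmpp.ne' hp.ne', Real.log_div (neg_pos.mpr hmmp).ne' hp.ne']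
  field_simp
  ring
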